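/- arXiv:1307.0885 — 5 statements merged into one kernel-verified Lean document; each statement's English description precedes it below -/
import Mathlib

section
/- Let n = 2m+1. Then gcd(2·3^m + 1, 3^n - 1) = 1. -/
/- Writing a = 3^m, we have 3^n - 1 = 3a² - 1, and the Bézout identity
(6a - 3)(2a + 1) - 4(3a² - 1) = 1 shows that it is coprime to 2a + 1. -/

theorem isCoprime_two_mul_add_one_three_mul_sq_sub_one {R : Type*} [CommRing R] (a : R) :
    IsCoprime (2 * a + 1) (3 * a ^ 2 - 1) :=
  ⟨6 * a - 3, -4, by ring⟩

theorem stmt_6 (m n : ℕ) (hn : n = 2 * m + 1) :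
    Nat.gcd (2 * 3 ^ m + 1) (3 ^ n - 1) = 1 := by
  subst hn
  rw [← Nat.coprime_iff_gcd_eq_one, ← Nat.isCoprime_iff_coprime,
    Nat.cast_sub (Nat.one_le_pow _ _ three_pos)]
  have hpow : (3 : ℤ) ^ (2 * m + 1) = 3 * (3 ^ m) ^ 2 := by ring
  push_cast [hpow]
  exact isCoprime_two_mul_add_one_three_mul_sq_sub_one _
end

section
/- Let n = 2m+1 with m ≥ 1. Then gcd(2(3^{m+1} - 1), 3^n - 1) = 2 and gcd((3^n + 1)/4, 3^n - 1) = 1. -/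
/-!
Since `gcd (3^a - 1) (3^b - 1) = 3^(gcd a b) - 1` and `gcd (m + 1) (2m + 1) = 1`, the numbers
`3^(m+1) - 1` and `3^n - 1` have gcd `2`. For odd `n` we have `3^n ≡ 3 (mod 8)`, so `3^n - 1` is
twice an odd number, which keeps the extra factor `2` from enlarging the gcd, and `(3^n + 1)/4`
is odd, while any common divisor of it and `3^n - 1` divides `(3^n + 1) - (3^n - 1) = 2`.
-/

theorem Nat.coprime_succ_two_mul_add_one (m : ℕ) : Nat.Coprime (m + 1) (2 * m + 1) := by
  rw [show 2 * m + 1 = m + (m + 1) by ring, Nat.coprime_add_self_right]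
  simp

theorem three_pow_mod_eight_of_odd {n : ℕ} (hn : Odd n) : 3 ^ n % 8 = 3 := by
  obtain ⟨k, rfl⟩ := hn
  rw [pow_succ, pow_mul, Nat.mul_mod, Nat.pow_mod]
  norm_num

theorem Nat.gcd_two_mul_eq_two_of_mod_four {a c : ℕ} (hac : Nat.gcd a c = 2) (hc : c % 4 = 2) :
    Nat.gcd (2 * a) c = 2 := by
  set G := Nat.gcd (2 * a) c
  have hG4 : G ∣ 4 := by
    have : G ∣ Nat.gcd (2 * a) (2 * c) :=
      Nat.dvd_gcd (Nat.gcd_dvd_left _ _) (dvd_mul_of_dvd_right (Nat.gcd_dvd_right _ _) 2)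
    rwa [Nat.gcd_mul_left, hac] at this
  have h2G : 2 ∣ G := Nat.dvd_gcd (dvd_mul_right 2 a) (by omega)
  have hGc : G ∣ c := Nat.gcd_dvd_right _ _
  have hG_le : G ≤ 4 := Nat.le_of_dvd (by norm_num) hG4
  interval_cases G <;> omega

theorem Nat.coprime_add_one_div_four_sub_one {N : ℕ} (hN : N % 8 = 3) :
    Nat.Coprime ((N + 1) / 4) (N - 1) := by
  obtain ⟨k, rfl⟩ : ∃ k, N = 8 * k + 3 := ⟨N / 8, by omega⟩
  rw [show (8 * k + 3 + 1) / 4 = 2 * k + 1 by omega, show 8 * k + 3 - 1 = 8 * k + 2 by omega,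
    ← Nat.isCoprime_iff_coprime]
  exact ⟨1 - 4 * k, k, by push_cast; ring⟩

theorem stmt_7_general (m n : ℕ) (hn : n = 2 * m + 1) :
    Nat.gcd (2 * (3 ^ (m + 1) - 1)) (3 ^ n - 1) = 2 ∧
    Nat.gcd ((3 ^ n + 1) / 4) (3 ^ n - 1) = 1 := by
  have h8 : 3 ^ n % 8 = 3 := three_pow_mod_eight_of_odd (hn ▸ odd_two_mul_add_one m)
  refine ⟨Nat.gcd_two_mul_eq_two_of_mod_four ?_ ?_, Nat.coprime_add_one_div_four_sub_one h8⟩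
  · rw [Nat.pow_sub_one_gcd_pow_sub_one, hn, Nat.coprime_succ_two_mul_add_one, pow_one]
  · generalize 3 ^ n = N at h8 ⊢
    omega

theorem stmt_7 (m n : ℕ) (hm : 1 ≤ m) (hn : n = 2 * m + 1) :
    Nat.gcd (2 * (3 ^ (m + 1) - 1)) (3 ^ n - 1) = 2 ∧
    Nat.gcd ((3 ^ n + 1) / 4) (3 ^ n - 1) = 1 :=
  stmt_7_general m n hn
end

section
/- Let n = 2m+1 ≥ 3. For every j in the cyclotomic coset of 1 or of 2·3^m + 1 modulo 3^n - 1 (i.e., j ≡ 3^i or (2·3^m+1)·3^i mod 3^n - 1 for some i), one has H(j) = wt(j) + wt((3^{m+1}-1)j) - wt(2(3^{m+1}-1)j) = 1, where wt denotes the ternary digit sum of the residue modulo 3^n - 1. -/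
/-!
Multiplying by 3 rotates the `n` ternary digits of a residue modulo `3^n - 1`, so `wt` and
hence `H` are constant on cyclotomic cosets, and it suffices to evaluate `H` at the coset
leaders `1` and `c = 2·3^m + 1`. There `3^(m+1) - 1` and `2(3^(m+1) - 1)` have digit sums
`2m + 2` each, while `(3^(m+1) - 1)c ≡ 3^m + 1` and `2(3^(m+1) - 1)c ≡ 2·3^m + 2` have
digit sums `2` and `4`; so `H 1 = 1 + (2m + 2) - (2m + 2)` and `H c = 3 + 2 - 4`.
-/

/-- `wt n a` is the ternary digit sum of the residue of `a` modulo `3^n - 1`. -/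
def wt (n a : ℕ) : ℕ := (Nat.digits 3 (a % (3 ^ n - 1))).sum

/-- `H n m j = wt(j) + wt((3^{m+1}-1)j) - wt(2(3^{m+1}-1)j)` as an integer. -/
def H (n m j : ℕ) : ℤ :=
  (wt n j : ℤ) + wt n ((3 ^ (m + 1) - 1) * j) - wt n (2 * (3 ^ (m + 1) - 1) * j)

namespace Nat

theorem sum_digits_add_base_pow_mul {b k s : ℕ} (t : ℕ) (hb : 1 < b) (hs : s < b ^ k) :
    (b.digits (s + b ^ k * t)).sum = (b.digits s).sum + (b.digits t).sum := by
  rcases Nat.eq_zero_or_pos t with rfl | ht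
  · simp
  rw [← Nat.add_sub_cancel' ((digits_length_le_iff hb s).2 hs),
    ← digits_append_zeroes_append_digits hb ht]
  simp

theorem sum_digits_of_lt_base {b x : ℕ} (hx : x < b) : (b.digits x).sum = x := by
  rcases eq_or_ne x 0 with rfl | hx0
  · simp
  · simp [digits_of_lt b x hx0 hx]

theorem sum_digits_base_pow_sub_one {b : ℕ} (hb : 1 < b) (k : ℕ) :
    (b.digits (b ^ k - 1)).sum = (b - 1) * k := by
  induction k with
  | zero => simp
  | succ k ih =>
    have hpow : 1 ≤ b ^ k := Nat.one_le_pow _ _ (by omega)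
    have hsplit : b ^ (k + 1) - 1 = (b - 1) + b ^ 1 * (b ^ k - 1) := by
      zify [hpow, hb.le, Nat.one_le_pow (k + 1) b (by omega)]
      ring
    rw [hsplit, sum_digits_add_base_pow_mul _ hb (by simpa using Nat.sub_lt (by omega) one_pos),
      sum_digits_of_lt_base (by omega), ih]
    ring

end Nat

open Nat

theorem wt_congr {n a b : ℕ} (h : a ≡ b [MOD 3 ^ n - 1]) : wt n a = wt n b := by
  unfold wt
  rw [h]

theorem wt_add_mul_self (n a c : ℕ) : wt n (a + (3 ^ n - 1) * c) = wt n a := by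
  unfold wt
  rw [Nat.add_mul_mod_self_left]

theorem wt_of_lt {n a : ℕ} (h : a < 3 ^ n - 1) : wt n a = (digits 3 a).sum := by
  rw [wt, Nat.mod_eq_of_lt h]

theorem wt_three_mul (n a : ℕ) : wt n (3 * a) = wt n a := by
  rcases n with _ | k
  · simpa [wt] using
      sum_digits_add_base_pow_mul (b := 3) (k := 1) (s := 0) a (by norm_num) (by norm_num)
  have hrM : a % (3 ^ (k + 1) - 1) < 3 ^ (k + 1) - 1 :=
    Nat.mod_lt _ (by have := Nat.one_lt_pow (n := k + 1) (a := 3); omega)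
  obtain ⟨s, q, hs, hq, hr⟩ : ∃ s q, s < 3 ^ k ∧ q < 3 ∧ a % (3 ^ (k + 1) - 1) = s + 3 ^ k * q :=
    ⟨_, _, Nat.mod_lt _ (by positivity), Nat.div_lt_of_lt_mul (by rw [← pow_succ]; omega),
      (Nat.mod_add_div _ _).symm⟩
  rw [hr, pow_succ] at hrM
  have hpow := Nat.one_le_pow k 3 (by norm_num)
  -- `3(s + 3^k q) = (q + 3s) + q(3^(k+1) - 1)`: the leading digit `q` wraps around to the front.
  have hrot : 3 * a ≡ q + 3 ^ 1 * s [MOD 3 ^ (k + 1) - 1] := by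
    refine ((Nat.mod_modEq a _).symm.mul_left 3).trans ?_
    rw [hr, pow_succ]
    refine (Nat.modEq_iff_dvd' ?_ |>.2 ⟨q, ?_⟩).symm <;> interval_cases q <;> omega
  rw [wt_congr hrot, wt_of_lt (by rw [pow_succ]; interval_cases q <;> omega), wt, hr,
    sum_digits_add_base_pow_mul _ (by norm_num) (by omega),
    sum_digits_add_base_pow_mul _ (by norm_num) hs, sum_digits_of_lt_base hq, add_comm]

theorem wt_mul_three_pow (n a i : ℕ) : wt n (a * 3 ^ i) = wt n a := by
  induction i with
  | zero => simp
  | succ i ih => rw [pow_succ, ← mul_assoc, mul_comm, wt_three_mul, ih]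

theorem H_congr {n m j j' : ℕ} (h : j ≡ j' [MOD 3 ^ n - 1]) : H n m j = H n m j' := by
  simp only [H, wt_congr h, wt_congr (h.mul_left (3 ^ (m + 1) - 1)),
    wt_congr (h.mul_left (2 * (3 ^ (m + 1) - 1)))]

theorem H_mul_three_pow (n m j i : ℕ) : H n m (j * 3 ^ i) = H n m j := by
  simp only [H, ← mul_assoc, wt_mul_three_pow]

section CosetLeaders

variable {m n : ℕ}

theorem wt_of_le_two_mul_three_pow_succ (hm : 1 ≤ m) (hn : n = 2 * m + 1) {a : ℕ}
    (ha : a ≤ 2 * 3 ^ (m + 1)) : wt n a = (digits 3 a).sum := by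
  refine wt_of_lt (lt_of_le_of_lt ha ?_)
  have h3m : 3 ≤ 3 ^ m := le_self_pow₀ (by norm_num) (by omega)
  have hsq : 3 * 3 ^ m ≤ 3 ^ m * 3 ^ m := Nat.mul_le_mul_right _ h3m
  have hpow_n : 3 ^ n = 3 * (3 ^ m * 3 ^ m) := by rw [hn]; ring
  rw [pow_succ, hpow_n]
  omega

theorem H_one (hm : 1 ≤ m) (hn : n = 2 * m + 1) : H n m 1 = 1 := by
  have hpow : 1 ≤ 3 ^ m := Nat.one_le_pow _ _ (by norm_num)
  have hsplit : 2 * (3 ^ (m + 1) - 1) = 1 + 3 ^ 1 * ((3 ^ m - 1) + 3 ^ m * 1) := by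
    rw [pow_succ]; omega
  have wt_one : wt n 1 = 1 := by
    rw [wt_of_le_two_mul_three_pow_succ hm hn (by omega), sum_digits_of_lt_base (by norm_num)]
  have wt_A : wt n (3 ^ (m + 1) - 1) = 2 * (m + 1) := by
    rw [wt_of_le_two_mul_three_pow_succ hm hn (by omega), sum_digits_base_pow_sub_one (by norm_num)]
  have wt_two_A : wt n (2 * (3 ^ (m + 1) - 1)) = 2 * m + 2 := by
    rw [wt_of_le_two_mul_three_pow_succ hm hn (by omega), hsplit,
      sum_digits_add_base_pow_mul _ (by norm_num) (by norm_num),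
      sum_digits_add_base_pow_mul _ (by norm_num) (by omega),
      sum_digits_base_pow_sub_one (by norm_num), sum_digits_of_lt_base (by norm_num : 1 < 3)]
    omega
  simp only [H, mul_one, wt_one, wt_A, wt_two_A]
  push_cast
  ring

theorem H_two_mul_three_pow_add_one (hm : 1 ≤ m) (hn : n = 2 * m + 1) :
    H n m (2 * 3 ^ m + 1) = 1 := by
  have hpow : 1 ≤ 3 ^ (m + 1) := Nat.one_le_pow _ _ (by norm_num)
  have hpow' : 1 ≤ 3 ^ n := Nat.one_le_pow _ _ (by norm_num)
  have hA : (3 ^ (m + 1) - 1) * (2 * 3 ^ m + 1) = (1 + 3 ^ m * 1) + (3 ^ n - 1) * 2 := by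
    zify [hpow, hpow']; subst hn; ring
  have hA2 : 2 * (3 ^ (m + 1) - 1) * (2 * 3 ^ m + 1) = (2 + 3 ^ m * 2) + (3 ^ n - 1) * 4 := by
    zify [hpow, hpow']; subst hn; ring
  have h3m : 3 ≤ 3 ^ m := le_self_pow₀ (by norm_num) (by omega)
  have wt_digits (x y : ℕ) (hx : x < 3) (hy : y < 3) : wt n (x + 3 ^ m * y) = x + y := by
    have hy' : 3 ^ m * y ≤ 3 ^ m * 2 := Nat.mul_le_mul_left _ (by omega)
    rw [wt_of_le_two_mul_three_pow_succ hm hn (by rw [pow_succ]; omega),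
      sum_digits_add_base_pow_mul _ (by norm_num) (by omega),
      sum_digits_of_lt_base hx, sum_digits_of_lt_base hy]
  simp only [H, hA, hA2, wt_add_mul_self]
  rw [show 2 * 3 ^ m + 1 = 1 + 3 ^ m * 2 by ring, wt_digits 1 2 (by norm_num) (by norm_num),
    wt_digits 1 1 (by norm_num) (by norm_num), wt_digits 2 2 (by norm_num) (by norm_num)]
  norm_num

end CosetLeaders

theorem stmt_10 (m n : ℕ) (hm : 1 ≤ m) (hn : n = 2 * m + 1) (j : ℕ)
    (hj : ∃ i ≤ n - 1, j ≡ 3 ^ i [MOD 3 ^ n - 1] ∨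
      j ≡ (2 * 3 ^ m + 1) * 3 ^ i [MOD 3 ^ n - 1]) :
    H n m j = 1 := by
  obtain ⟨i, -, hcoset | hcoset⟩ := hj
  · rw [H_congr hcoset, ← one_mul (3 ^ i), H_mul_three_pow, H_one hm hn]
  · rw [H_congr hcoset, H_mul_three_pow, H_two_mul_three_pow_add_one hm hn]
end

section
/- Let n ≥ 1 and for integers a with residue ā modulo 3^n - 1, let wt denote the ternary digit sum of the residue. For any i ≥ 0 and any a, wt(a + 2·3^i) - wt(2(a + 2·3^i)) ≥ wt(a) - wt(2a) - 2, where all quantities are computed on residues modulo 3^n - 1. -/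
/-- `wtZ n a` is the ternary digit sum of the residue of the integer `a`
modulo `3^n - 1`, the residue being taken in `[0, 3^n - 2]`. -/
def wtZ (n : ℕ) (a : ℤ) : ℤ :=
  ((Nat.digits 3 (a % ((3 : ℤ) ^ n - 1)).toNat).sum : ℤ)

/-!
Put `M = 3^n - 1`. For `0 ≤ x < M` and `j < n` one has `⌊3^j x / M⌋ = ⌊x / 3^(n-j)⌋`, so
Legendre's formula turns into the cyclic identity `wt(x) = x - 2 ∑_{j<n} ⌊3^j x / M⌋`, valid
for every integer `x`. The linear parts cancel in
`wt(a) + wt(2(a+s)) - wt(a+s) - wt(2a) - wt(s)`, which is therefore `-2` times a sum of terms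
`⌊u⌋ + ⌊2u+2v⌋ - ⌊u+v⌋ - ⌊2u⌋ - ⌊v⌋`, each nonnegative because `⌊2u⌋ - ⌊u⌋ = ⌊u + 1/2⌋`.
For `s = 2·3^i` the identity also shows `wt(s) = wt(2) ≤ 2`.
-/

open Finset

theorem Nat.mul_div_eq_div_of_add_one_eq_mul {M P Q r : ℕ} (hM : M + 1 = P * Q)
    (hr : r < M) : P * r / M = r / Q := by
  have hQ : 0 < Q := Nat.pos_of_ne_zero fun h => by simp [h] at hM
  apply Nat.div_eq_of_lt_le
  · calc r / Q * M ≤ r / Q * (P * Q) := by gcongr; omega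
      _ = P * (Q * (r / Q)) := by ring
      _ ≤ P * r := by gcongr; exact Nat.mul_div_le r Q
  · refine Nat.lt_of_mul_lt_mul_left (a := Q) ?_
    calc Q * (P * r) = (P * Q) * r := by ring
      _ = M * r + r := by rw [← hM]; ring
      _ < M * (r + 1) := by rw [mul_add_one]; omega
      _ ≤ M * (Q * (r / Q + 1)) := by gcongr; exact Nat.lt_mul_div_succ r hQ
      _ = Q * ((r / Q + 1) * M) := by ring

theorem Nat.sub_one_mul_sum_pow_mul_div_eq_sub_sum_digits {p n r : ℕ} [hp : Fact p.Prime]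
    (hr : r < p ^ n - 1) :
    (p - 1) * ∑ j ∈ range n, p ^ j * r / (p ^ n - 1) = r - (p.digits r).sum := by
  have hpn : 1 ≤ p ^ n := Nat.one_le_pow _ _ hp.out.pos
  have hn : n ≠ 0 := by rintro rfl; simp at hr
  have hsum : ∑ j ∈ range n, p ^ j * r / (p ^ n - 1) = ∑ i ∈ Ico 1 (n + 1), r / p ^ i := by
    rw [sum_Ico_eq_sum_range, Nat.add_sub_cancel]
    conv_rhs => rw [← sum_range_reflect]
    refine sum_congr rfl fun j hj => ?_
    have hj : j < n := mem_range.1 hj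
    rw [Nat.mul_div_eq_div_of_add_one_eq_mul (Q := p ^ (n - j)) _ hr]
    · congr 2; omega
    · rw [← pow_add, Nat.add_sub_cancel' hj.le, Nat.sub_add_cancel hpn]
  rw [hsum, ← padicValNat_factorial, sub_one_mul_padicValNat_factorial]
  exact Nat.lt_succ_of_lt (Nat.log_lt_of_lt_pow' hn (by omega))

theorem wtZ_eq_sub_two_mul_sum {n : ℕ} (hn : 1 ≤ n) (x : ℤ) :
    wtZ n x = x - 2 * ∑ j ∈ range n, 3 ^ j * x / (3 ^ n - 1) := by
  set M : ℤ := 3 ^ n - 1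
  have hMcast : ((3 ^ n - 1 : ℕ) : ℤ) = M := by
    push_cast [Nat.one_le_pow n 3 (by norm_num)]
    rfl
  have hM : 0 < M := sub_pos.2 (one_lt_pow₀ (by norm_num) (by omega))
  set r := (x % M).toNat
  have hr : (r : ℤ) = x % M := Int.toNat_of_nonneg (Int.emod_nonneg x hM.ne')
  have hrM : r < 3 ^ n - 1 := by
    have := Int.emod_lt_of_pos x hM
    omega
  have hdigits :
      ((Nat.digits 3 r).sum : ℤ) = r - 2 * ∑ j ∈ range n, 3 ^ j * (r : ℤ) / M := by
    have h := Nat.sub_one_mul_sum_pow_mul_div_eq_sub_sum_digits hrM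
    have hle := Nat.digit_sum_le 3 r
    have h' : ((Nat.digits 3 r).sum : ℤ) +
        2 * ((∑ j ∈ range n, 3 ^ j * r / (3 ^ n - 1) : ℕ) : ℤ) = r := by
      norm_num at h
      omega
    simp only [Nat.cast_sum, Nat.cast_mul, Nat.cast_pow, Nat.cast_ofNat, Int.natCast_div,
      hMcast] at h'
    linarith
  have hterm : ∀ j, 3 ^ j * x / M = 3 ^ j * (r : ℤ) / M + 3 ^ j * (x / M) := fun j => by
    rw [← Int.add_mul_ediv_right _ _ hM.ne', hr]
    congr 1
    linear_combination (-(3 : ℤ) ^ j) * Int.mul_ediv_add_emod x M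
  have hgeom : 2 * ∑ j ∈ range n, (3 : ℤ) ^ j = M := by
    have := geom_sum_mul (3 : ℤ) n
    linarith
  have hx : x = r + M * (x / M) := by
    rw [hr]
    linear_combination -Int.mul_ediv_add_emod x M
  rw [sum_congr rfl fun j _ => hterm j, sum_add_distrib, ← sum_mul]
  change ((Nat.digits 3 r).sum : ℤ) = _
  linear_combination hdigits - hx + (x / M) * hgeom

theorem wtZ_three_mul {n : ℕ} (hn : 1 ≤ n) (x : ℤ) : wtZ n (3 * x) = wtZ n x := by
  set M : ℤ := 3 ^ n - 1
  have hM : M ≠ 0 := (sub_pos.2 (one_lt_pow₀ (by norm_num) (by omega))).ne'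
  have hshift : ∑ j ∈ range n, 3 ^ j * (3 * x) / M = ∑ j ∈ range n, 3 ^ j * x / M + x := by
    have hsucc' := sum_range_succ' (fun j => 3 ^ j * x / M) n
    have hsucc := sum_range_succ (fun j => 3 ^ j * x / M) n
    have htop : 3 ^ n * x / M = x / M + x := by
      rw [← Int.add_mul_ediv_left _ _ hM]
      congr 1
      simp only [M]
      ring
    simp only [pow_succ, mul_assoc, pow_zero, one_mul, htop] at hsucc' hsucc
    linarith
  rw [wtZ_eq_sub_two_mul_sum hn, wtZ_eq_sub_two_mul_sum hn, hshift]
  ring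

theorem wtZ_three_pow_mul {n : ℕ} (hn : 1 ≤ n) (i : ℕ) (x : ℤ) :
    wtZ n (3 ^ i * x) = wtZ n x := by
  induction i with
  | zero => simp
  | succ i ih => rw [pow_succ', mul_assoc, wtZ_three_mul hn, ih]

theorem wtZ_two_le {n : ℕ} : wtZ n 2 ≤ 2 := by
  have hM : (0 : ℤ) ≤ 3 ^ n - 1 := by
    have : (1 : ℤ) ≤ 3 ^ n := one_le_pow₀ (by norm_num)
    linarith
  have hmod : (2 : ℤ) % (3 ^ n - 1) ≤ 2 := by
    have := Int.mul_ediv_add_emod 2 ((3 : ℤ) ^ n - 1)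
    have := mul_nonneg hM (Int.ediv_nonneg (by norm_num : (0 : ℤ) ≤ 2) hM)
    linarith
  have := Nat.digit_sum_le 3 ((2 : ℤ) % (3 ^ n - 1)).toNat
  unfold wtZ
  omega

theorem Int.two_mul_ediv_sub_ediv_add_ediv_le {M : ℤ} (hM : 0 < M) (A S : ℤ) :
    2 * A / M - A / M + S / M ≤ 2 * (A + S) / M - (A + S) / M := by
  obtain ⟨a, α, rfl, ha0, haM⟩ : ∃ a α, A = a + α * M ∧ 0 ≤ a ∧ a < M :=
    ⟨A % M, A / M, by linear_combination -Int.mul_ediv_add_emod A M,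
      Int.emod_nonneg A hM.ne', Int.emod_lt_of_pos A hM⟩
  obtain ⟨s, σ, rfl, hs0, hsM⟩ : ∃ s σ, S = s + σ * M ∧ 0 ≤ s ∧ s < M :=
    ⟨S % M, S / M, by linear_combination -Int.mul_ediv_add_emod S M,
      Int.emod_nonneg S hM.ne', Int.emod_lt_of_pos S hM⟩
  have hcarry : (a + s) / M + 2 * a / M ≤ 2 * (a + s) / M := by
    rw [Int.le_ediv_iff_mul_le hM]
    by_cases has : a + s < M
    · rw [Int.ediv_eq_zero_of_lt (by omega) has]
      have := Int.ediv_mul_le (2 * a) hM.ne'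
      linarith
    · have h1 : (a + s) / M < 2 := (Int.ediv_lt_iff_lt_mul hM).2 (by linarith)
      have h2 : 2 * a / M < 2 := (Int.ediv_lt_iff_lt_mul hM).2 (by linarith)
      nlinarith
  have e1 : 2 * (a + α * M) = 2 * a + 2 * α * M := by ring
  have e2 : a + α * M + (s + σ * M) = a + s + (α + σ) * M := by ring
  have e3 : 2 * (a + s + (α + σ) * M) = 2 * (a + s) + 2 * (α + σ) * M := by ring
  rw [e1, e2, e3, Int.add_mul_ediv_right _ _ hM.ne', Int.add_mul_ediv_right _ _ hM.ne',
    Int.add_mul_ediv_right _ _ hM.ne', Int.add_mul_ediv_right _ _ hM.ne',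
    Int.add_mul_ediv_right _ _ hM.ne', Int.ediv_eq_zero_of_lt ha0 haM,
    Int.ediv_eq_zero_of_lt hs0 hsM]
  linarith

theorem wtZ_add_wtZ_two_mul_add_le {n : ℕ} (hn : 1 ≤ n) (a s : ℤ) :
    wtZ n a + wtZ n (2 * (a + s)) ≤ wtZ n (a + s) + wtZ n (2 * a) + wtZ n s := by
  have hM : (0 : ℤ) < 3 ^ n - 1 := sub_pos.2 (one_lt_pow₀ (by norm_num) (by omega))
  have hterm : ∀ j ∈ range n,
      3 ^ j * (2 * a) / (3 ^ n - 1) - 3 ^ j * a / (3 ^ n - 1) + 3 ^ j * s / (3 ^ n - 1) ≤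
        3 ^ j * (2 * (a + s)) / (3 ^ n - 1) - 3 ^ j * (a + s) / (3 ^ n - 1) := fun j _ => by
    have := Int.two_mul_ediv_sub_ediv_add_ediv_le hM (3 ^ j * a) (3 ^ j * s)
    rwa [← mul_add, mul_left_comm 2, mul_left_comm 2] at this
  have hsum := sum_le_sum hterm
  simp only [sum_add_distrib, sum_sub_distrib] at hsum
  simp only [wtZ_eq_sub_two_mul_sum hn]
  linarith

theorem stmt_14 (n : ℕ) (hn : 1 ≤ n) (i : ℕ) (a : ℤ) :
    wtZ n (a + 2 * 3 ^ i) - wtZ n (2 * (a + 2 * 3 ^ i)) ≥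
      wtZ n a - wtZ n (2 * a) - 2 := by
  have hs : wtZ n (2 * 3 ^ i) ≤ 2 := by
    rw [mul_comm, wtZ_three_pow_mul hn]
    exact wtZ_two_le
  linarith [wtZ_add_wtZ_two_mul_add_le hn a (2 * 3 ^ i)]
end

section
/- Let n = 2m+1 ≥ 3 and let j have a ternary representation (modulo 3^n - 1, up to cyclic shift) consisting only of 0's and isolated 1's (every 1 flanked by 0's on both sides cyclically), with at least two 1's. Then wt((3^{m+1}-1)j) - wt(2(3^{m+1}-1)j) ≥ 0, where wt is the ternary digit sum of the residue modulo 3^n - 1. -/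
/-- the `i`-th ternary digit of `j`. -/
def dig (j i : ℕ) : ℕ := j / 3 ^ i % 3

def digitSum (b x : ℕ) : ℕ := (Nat.digits b x).sum

section DigitSum

variable {b : ℕ}

theorem digitSum_zero (b : ℕ) : digitSum b 0 = 0 := by
  simp [digitSum]

theorem digitSum_add_mul (hb : 1 < b) {r : ℕ} (hr : r < b) (k : ℕ) :
    digitSum b (r + b * k) = r + digitSum b k := by
  by_cases h : r = 0 ∧ k = 0
  · simp [h.1, h.2, digitSum_zero]
  · rw [digitSum, Nat.digits_add b hb r k hr (by tauto), List.sum_cons, digitSum]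

theorem digitSum_eq_mod_add_div (hb : 1 < b) (x : ℕ) :
    digitSum b x = x % b + digitSum b (x / b) := by
  conv_lhs => rw [← Nat.mod_add_div x b]
  exact digitSum_add_mul hb (Nat.mod_lt x (by omega)) _

theorem digitSum_add_pow_mul (hb : 1 < b) {k z : ℕ} (hz : z < b ^ k) (t : ℕ) :
    digitSum b (z + b ^ k * t) = digitSum b z + digitSum b t := by
  induction k generalizing z with
  | zero => simp_all [digitSum_zero]
  | succ k ih =>
    have hzb : z / b < b ^ k := Nat.div_lt_of_lt_mul (by rwa [mul_comm, ← pow_succ])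
    have hsplit : z + b ^ (k + 1) * t = z % b + b * (z / b + b ^ k * t) := by
      conv_lhs => rw [← Nat.mod_add_div z b]
      ring
    rw [hsplit, digitSum_add_mul hb (Nat.mod_lt z (by omega)), ih hzb,
      digitSum_eq_mod_add_div hb z, add_assoc]

theorem digitSum_pow_sub_one_sub_add (hb : 1 < b) {n x : ℕ} (hx : x < b ^ n) :
    digitSum b (b ^ n - 1 - x) + digitSum b x = (b - 1) * n := by
  induction n generalizing x with
  | zero => simp_all [digitSum_zero]
  | succ n ih =>
    have hxb : x / b < b ^ n := Nat.div_lt_of_lt_mul (by rwa [mul_comm, ← pow_succ])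
    have hrb : x % b < b := Nat.mod_lt x (by omega)
    have hcompl : b ^ (n + 1) - 1 - x = (b - 1 - x % b) + b * (b ^ n - 1 - x / b) := by
      have hle : b * (x / b) + b ≤ b * b ^ n := by nlinarith
      rw [pow_succ', Nat.mul_sub, Nat.mul_sub, mul_one]
      conv_lhs => rw [← Nat.mod_add_div x b]
      omega
    rw [hcompl, digitSum_add_mul hb (by omega), digitSum_eq_mod_add_div hb x]
    have := ih hxb
    rw [Nat.mul_succ]
    omega

end DigitSum

def ZeroOneDigits (x : ℕ) : Prop := ∀ i, dig x i ≤ 1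

theorem zeroOneDigits_iff {x : ℕ} : ZeroOneDigits x ↔ x % 3 ≤ 1 ∧ ZeroOneDigits (x / 3) := by
  have hsucc : ∀ i, dig x (i + 1) = dig (x / 3) i := fun i => by
    simp [dig, pow_succ', Nat.div_div_eq_div_mul]
  refine ⟨fun h => ⟨by simpa [dig] using h 0, fun i => hsucc i ▸ h (i + 1)⟩, ?_⟩
  rintro ⟨h0, h⟩ (_ | i)
  · simpa [dig] using h0
  · exact hsucc i ▸ h i

namespace ZeroOneDigits

theorem zero : ZeroOneDigits 0 := fun i => by simp [dig]

theorem add_three_mul {t z : ℕ} (ht : t ≤ 1) (hz : ZeroOneDigits z) :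
    ZeroOneDigits (t + 3 * z) :=
  zeroOneDigits_iff.2 ⟨by omega, by rwa [show (t + 3 * z) / 3 = z by omega]⟩

theorem mod_pow {x : ℕ} (h : ZeroOneDigits x) (k : ℕ) : ZeroOneDigits (x % 3 ^ k) := by
  induction k generalizing x with
  | zero => simpa [Nat.mod_one] using zero
  | succ k ih =>
    rw [pow_succ', Nat.mod_mul]
    obtain ⟨h0, h⟩ := zeroOneDigits_iff.1 h
    exact add_three_mul h0 (ih h)

theorem two_mul_lt {x k : ℕ} (h : ZeroOneDigits x) (hx : x < 3 ^ k) : 2 * x < 3 ^ k := by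
  induction k generalizing x with
  | zero => omega
  | succ k ih =>
    obtain ⟨h0, h⟩ := zeroOneDigits_iff.1 h
    have := ih h (by omega)
    omega

theorem three_mul_mod {n x : ℕ} (h : ZeroOneDigits x) (hx : x < 3 ^ n - 1) :
    ZeroOneDigits (3 * x % (3 ^ n - 1)) ∧ digitSum 3 (3 * x % (3 ^ n - 1)) = digitSum 3 x := by
  obtain ⟨k, rfl⟩ : ∃ k, n = k + 1 := Nat.exists_eq_succ_of_ne_zero (by rintro rfl; simp at hx)
  set t := x / 3 ^ k
  set z := x % 3 ^ k
  have hx_eq : x = z + 3 ^ k * t := (Nat.mod_add_div x _).symm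
  have hz : z < 3 ^ k := Nat.mod_lt _ (by positivity)
  have ht : t ≤ 1 := by
    have htop : t < 3 := Nat.div_lt_of_lt_mul (by rw [← pow_succ]; omega)
    have := h k
    simp only [dig] at this
    omega
  have hrot : 3 * x % (3 ^ (k + 1) - 1) = t + 3 * z := by
    have hmul : 3 * x = (t + 3 * z) + t * (3 ^ (k + 1) - 1) := by
      rw [pow_succ]; interval_cases t <;> omega
    rw [hmul, Nat.add_mul_mod_self_right, Nat.mod_eq_of_lt (by rw [pow_succ]; omega)]
  have hst : digitSum 3 t = t := by
    simpa [digitSum_zero] using digitSum_add_mul (b := 3) (by norm_num) (show t < 3 by omega) 0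
  rw [hrot]
  refine ⟨add_three_mul ht (h.mod_pow k), ?_⟩
  conv_rhs => rw [hx_eq, digitSum_add_pow_mul (by norm_num) hz, hst]
  rw [digitSum_add_mul (by norm_num) (by omega), add_comm]

theorem pow_mul_mod {n x : ℕ} (h : ZeroOneDigits x) (hx : x < 3 ^ n - 1) (k : ℕ) :
    ZeroOneDigits (3 ^ k * x % (3 ^ n - 1)) ∧
      digitSum 3 (3 ^ k * x % (3 ^ n - 1)) = digitSum 3 x := by
  induction k with
  | zero => rw [pow_zero, one_mul, Nat.mod_eq_of_lt hx]; exact ⟨h, rfl⟩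
  | succ k ih =>
    rw [pow_succ', mul_assoc, ← Nat.mul_mod_mod]
    obtain ⟨h', hs⟩ := ih.1.three_mul_mod (Nat.mod_lt _ (by omega))
    exact ⟨h', hs.trans ih.2⟩

end ZeroOneDigits

theorem digitSum_two_mul_add_carry {D B u : ℕ} (hu : u ≤ 1) (hB : ZeroOneDigits B)
    (hA : ZeroOneDigits (D + B + u)) :
    digitSum 3 (2 * D + u) + digitSum 3 B = digitSum 3 D + digitSum 3 (D + B + u) := by
  induction hS : D + B + u using Nat.strong_induction_on generalizing D B u with
  | _ S ih =>
  rcases Nat.eq_zero_or_pos S with rfl | hSpos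
  · obtain ⟨rfl, rfl, rfl⟩ : D = 0 ∧ B = 0 ∧ u = 0 := by omega
    simp
  subst hS
  obtain ⟨hA0, hA'⟩ := zeroOneDigits_iff.1 hA
  obtain ⟨hB0, hB'⟩ := zeroOneDigits_iff.1 hB
  obtain ⟨c, hc⟩ : ∃ c, c = (D % 3 + B % 3 + u) / 3 := ⟨_, rfl⟩
  -- the last digit of `D + B + u` is not `2`, which forces the carries
  -- of `D + B + u` and `D + D + u` to agree
  have hcarry : (2 * D + u) / 3 = 2 * (D / 3) + c := by omega
  have hdiv : (D + B + u) / 3 = D / 3 + B / 3 + c := by omega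
  have := ih (D / 3 + B / 3 + c) (by omega) (by omega : c ≤ 1) hB' (hdiv ▸ hA') rfl
  have h3 : (1 : ℕ) < 3 := by norm_num
  rw [digitSum_eq_mod_add_div h3 (2 * D + u), digitSum_eq_mod_add_div h3 B,
    digitSum_eq_mod_add_div h3 D, digitSum_eq_mod_add_div h3 (D + B + u), hcarry, hdiv]
  omega

theorem digitSum_two_mul_add {D B : ℕ} (hB : ZeroOneDigits B) (hA : ZeroOneDigits (D + B)) :
    digitSum 3 (2 * D) + digitSum 3 B = digitSum 3 D + digitSum 3 (D + B) :=
  digitSum_two_mul_add_carry (u := 0) zero_le_one hB hA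

theorem mod_eq_of_add_modEq_add {N x y c : ℕ} (h : x + c ≡ y + c [MOD N]) (hy : y < N) :
    x % N = y :=
  Eq.trans (Nat.ModEq.add_right_cancel' c h) (Nat.mod_eq_of_lt hy)

theorem wt_two_mul_eq {n x A B : ℕ} (hA : ZeroOneDigits A) (hB : ZeroOneDigits B)
    (hAN : A < 3 ^ n - 1) (hB0 : 0 < B) (hBN : B < 3 ^ n - 1)
    (hsum : digitSum 3 A = digitSum 3 B) (hx : x + B ≡ A [MOD 3 ^ n - 1]) :
    wt n (2 * x) = wt n x := by
  have h2A := hA.two_mul_lt (k := n) (by omega)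
  have h2B := hB.two_mul_lt (k := n) (by omega)
  have h2x : 2 * x + 2 * B ≡ 2 * A [MOD 3 ^ n - 1] := by
    simpa only [mul_add] using hx.mul_left 2
  change digitSum 3 _ = digitSum 3 _
  rcases le_or_gt B A with hBA | hAB
  · have e1 : x % (3 ^ n - 1) = A - B :=
      mod_eq_of_add_modEq_add (by rwa [Nat.sub_add_cancel hBA]) (by omega)
    have e2 : 2 * x % (3 ^ n - 1) = 2 * (A - B) :=
      mod_eq_of_add_modEq_add (c := 2 * B)
        (by rwa [← mul_add 2 (A - B), Nat.sub_add_cancel hBA]) (by omega)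
    have key := digitSum_two_mul_add hB (by rwa [Nat.sub_add_cancel hBA])
    rw [Nat.sub_add_cancel hBA] at key
    rw [e1, e2]
    omega
  · have hN : ∀ a, a ≡ 3 ^ n - 1 + a [MOD 3 ^ n - 1] := fun a => Nat.add_modEq_left.symm
    have e1 : x % (3 ^ n - 1) = 3 ^ n - 1 - (B - A) := by
      refine mod_eq_of_add_modEq_add (hx.trans ?_) (by omega)
      rw [show 3 ^ n - 1 - (B - A) + B = 3 ^ n - 1 + A by omega]
      exact hN A
    have e2 : 2 * x % (3 ^ n - 1) = 3 ^ n - 1 - 2 * (B - A) := by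
      refine mod_eq_of_add_modEq_add (h2x.trans ?_) (by omega)
      rw [show 3 ^ n - 1 - 2 * (B - A) + 2 * B = 3 ^ n - 1 + 2 * A by omega]
      exact hN (2 * A)
    have key := digitSum_two_mul_add hA (by rwa [Nat.sub_add_cancel hAB.le])
    rw [Nat.sub_add_cancel hAB.le] at key
    have c1 := digitSum_pow_sub_one_sub_add (b := 3) (by norm_num) (show B - A < 3 ^ n by omega)
    have c2 := digitSum_pow_sub_one_sub_add (b := 3) (by norm_num)
      (show 2 * (B - A) < 3 ^ n by omega)
    rw [e1, e2]
    omega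

theorem stmt_18_general (m n : ℕ) (j : ℕ)
    (hj : 0 < j) (hj' : j < 3 ^ n - 1)
    (h01 : ∀ i < n, dig j i = 0 ∨ dig j i = 1) :
    0 ≤ (wt n ((3 ^ (m + 1) - 1) * j) : ℤ) - wt n (2 * (3 ^ (m + 1) - 1) * j) := by
  have hdig : ZeroOneDigits j := by
    intro i
    rcases lt_or_ge i n with hi | hi
    · rcases h01 i hi with h | h <;> omega
    · have : j < 3 ^ i := by
        have := Nat.pow_le_pow_right (show 0 < 3 by norm_num) hi
        omega
      simp [dig, Nat.div_eq_of_lt this]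
  obtain ⟨hA, hsum⟩ := hdig.pow_mul_mod hj' (m + 1)
  have hx : (3 ^ (m + 1) - 1) * j + j ≡ 3 ^ (m + 1) * j % (3 ^ n - 1) [MOD 3 ^ n - 1] := by
    rw [← Nat.succ_mul, Nat.succ_eq_add_one, Nat.sub_add_cancel (Nat.one_le_pow _ _ (by norm_num))]
    exact (Nat.mod_modEq _ _).symm
  rw [mul_assoc, wt_two_mul_eq hA hdig (Nat.mod_lt _ (by omega)) hj hj' hsum hx, sub_self]

theorem stmt_18 (m n : ℕ) (hm : 1 ≤ m) (hn : n = 2 * m + 1) (j : ℕ)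
    (hj : 0 < j) (hj' : j < 3 ^ n - 1)
    (h01 : ∀ i < n, dig j i = 0 ∨ dig j i = 1)
    (hiso : ∀ i < n, dig j i = 1 →
      dig j ((i + 1) % n) = 0 ∧ dig j ((i + (n - 1)) % n) = 0)
    (htwo : 2 ≤ ((Finset.range n).filter fun i => dig j i = 1).card) :
    0 ≤ (wt n ((3 ^ (m + 1) - 1) * j) : ℤ) - wt n (2 * (3 ^ (m + 1) - 1) * j) :=
  stmt_18_general m n j hj hj' h01
end
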